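/- Work in the Euclidean plane E = EuclideanSpace ℝ (Fin 2) with its standard orientation o. Let two disks have centers p_i, p_j ∈ E and radii r_i, r_j ≥ 0, set r = r_i + r_j, and assume d = ‖p_j − p_i‖ > r; let α = arcsin(r/d) and N = o.rotation (−(α + π/2)) (p_j − p_i). Let the second disk move with a fixed velocity v_j ∈ E, and let the first disk's velocity be random: v_i(ω) = (v̂₁ + ω₁, v̂₂ + ω₂), where ω₁, ω₂ are independent real random variables with laws gaussianReal 0 w₁ and gaussianReal 0 w₂, w₁, w₂ > 0. Let φ ∈ (0, 1/2) and c ≥ 0 satisfy (2/√π)·∫₀ᶜ exp(−t²) dt = 1 − 2φ. If the deterministic constraint ⟪N, (v̂₁, v̂₂)⟫ − ⟪N, v_j⟫ ≥ √(2·(N₁²·w₁ + N₂²·w₂))·c holds (where N = (N₁, N₂)), then the probability that the disks ever collide, P(∃ t ≥ 0, dist(p_i + t·v_i, p_j + t·v_j) ≤ r), is at most φ. (The transformed deterministic chance constraint of the paper guarantees the collision probability stays below the threshold.) -/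

import Mathlib

open MeasureTheory ProbabilityTheory Real
open scoped NNReal

noncomputable section

instance : Fact (Module.finrank ℝ (EuclideanSpace ℝ (Fin 2)) = 2) :=
  ⟨finrank_euclideanSpace_fin⟩

/-- The standard orientation of the Euclidean plane. -/
def stdOrientation : Orientation ℝ (EuclideanSpace ℝ (Fin 2)) (Fin 2) :=
  (EuclideanSpace.basisFun (Fin 2) ℝ).toBasis.orientation

/-!
A collision at some time `t ≥ 0` puts the relative velocity `v_i - v_j` inside the collision cone,
so `⟪N, v_i - v_j⟫ ≤ 0`. Since `⟪N, v_i⟫ = ⟪N, v̂⟫ + Z` with `Z = N₁ W₁ + N₂ W₂` a centred Gaussian of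
variance `V = N₁² w₁ + N₂² w₂`, a collision forces `Z ≤ -√(2V) c`, an event of probability
`(1 - erf c) / 2 = φ`.
-/

open Set
open scoped RealInnerProductSpace

lemma integral_Iic_neg_exp_neg_sq (c : ℝ) :
    ∫ t in Iic (-c), exp (-t ^ 2) = √π / 2 - ∫ t in (0 : ℝ)..c, exp (-t ^ 2) := by
  have hint : Integrable fun t : ℝ ↦ exp (-t ^ 2) := by
    simpa using integrable_exp_neg_mul_sq (b := 1) one_pos
  have hhalf : ∫ t in Iic (0 : ℝ), exp (-t ^ 2) = √π / 2 := by
    have h := integral_comp_neg_Iic 0 fun t : ℝ ↦ exp (-t ^ 2)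
    simp only [neg_sq, neg_zero] at h
    simpa [h] using integral_gaussian_Ioi 1
  have hsymm : ∫ t in (-c)..0, exp (-t ^ 2) = ∫ t in (0 : ℝ)..c, exp (-t ^ 2) := by
    have h := intervalIntegral.integral_comp_neg (a := 0) (b := c) fun t : ℝ ↦ exp (-t ^ 2)
    simp only [neg_sq, neg_zero] at h
    exact h.symm
  rw [← hhalf, ← hsymm, ← intervalIntegral.integral_Iic_sub_Iic hint.integrableOn hint.integrableOn,
    sub_sub_cancel]

lemma gaussianPDFReal_zero_inv_two (x : ℝ) :
    gaussianPDFReal 0 2⁻¹ x = (√π)⁻¹ * exp (-x ^ 2) := by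
  have h : 2 * π * ((2⁻¹ : ℝ≥0) : ℝ) = π := by push_cast; ring
  rw [gaussianPDFReal, h, sub_zero, NNReal.coe_inv, NNReal.coe_ofNat,
    mul_inv_cancel₀ two_ne_zero, div_one]

lemma gaussianReal_Iic_neg_sqrt_mul (v : ℝ≥0) (hv : v ≠ 0) (c : ℝ) :
    gaussianReal 0 v (Iic (-(√(2 * v) * c))) =
      ENNReal.ofReal (1 / 2 - (√π)⁻¹ * ∫ t in (0 : ℝ)..c, exp (-t ^ 2)) := by
  set k := √(2 * (v : ℝ))
  have hk : 0 < k := by positivity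
  have hk2 : k ^ 2 = 2 * v := Real.sq_sqrt (by positivity)
  have hv' : gaussianReal 0 v = (gaussianReal 0 2⁻¹).map (k * ·) := by
    rw [gaussianReal_map_const_mul, mul_zero]
    congr
    rw [← NNReal.coe_inj, NNReal.coe_mul, NNReal.coe_mk, hk2, NNReal.coe_inv, NNReal.coe_ofNat]
    ring
  have hpre : (k * ·) ⁻¹' Iic (-(k * c)) = Iic (-c) := by
    ext x; simp [← mul_neg, mul_le_mul_iff_right₀ hk]
  rw [hv', Measure.map_apply (by fun_prop) measurableSet_Iic, hpre,
    gaussianReal_apply_eq_integral 0 (by norm_num)]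
  simp_rw [gaussianPDFReal_zero_inv_two]
  rw [integral_const_mul, integral_Iic_neg_exp_neg_sq]
  congr 1
  field_simp

lemma map_const_mul_add_const_mul_eq_gaussianReal {Ω : Type*} [MeasurableSpace Ω]
    {P : Measure Ω} {X Y : Ω → ℝ} (hXY : IndepFun X Y P) {m₁ m₂ : ℝ} {v₁ v₂ : ℝ≥0}
    (hX : P.map X = gaussianReal m₁ v₁) (hY : P.map Y = gaussianReal m₂ v₂) (a b : ℝ) :
    P.map (fun ω ↦ a * X ω + b * Y ω) =
      gaussianReal (a * m₁ + b * m₂) (⟨a ^ 2, sq_nonneg a⟩ * v₁ + ⟨b ^ 2, sq_nonneg b⟩ * v₂) := by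
  have hXlaw : HasLaw X (gaussianReal m₁ v₁) P :=
    ⟨.of_map_ne_zero (by simp [hX, NeZero.ne]), hX⟩
  have hYlaw : HasLaw Y (gaussianReal m₂ v₂) P :=
    ⟨.of_map_ne_zero (by simp [hY, NeZero.ne]), hY⟩
  exact gaussianReal_add_gaussianReal_of_indepFun
    (hXY.comp (measurable_const_mul a) (measurable_const_mul b))
    (gaussianReal_const_mul hXlaw a).map_eq (gaussianReal_const_mul hYlaw b).map_eq

lemma sqrt_sq_sub_sq_mul_norm_le_inner {E : Type*} [NormedAddCommGroup E] [InnerProductSpace ℝ E]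
    {u v : E} {r t : ℝ} (hru : r < ‖u‖) (ht : 0 ≤ t) (hcol : ‖u - t • v‖ ≤ r) :
    √(‖u‖ ^ 2 - r ^ 2) * ‖v‖ ≤ ⟪u, v⟫ := by
  have hr : 0 ≤ r := (norm_nonneg _).trans hcol
  have ht : 0 < t := by
    refine ht.lt_of_ne fun h ↦ ?_
    rw [← h, zero_smul, sub_zero] at hcol
    linarith
  have hs := Real.sq_sqrt (by nlinarith : 0 ≤ ‖u‖ ^ 2 - r ^ 2)
  have hexp : ‖u‖ ^ 2 - 2 * (t * ⟪u, v⟫) + t ^ 2 * ‖v‖ ^ 2 ≤ r ^ 2 := by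
    have h := pow_le_pow_left₀ (norm_nonneg _) hcol 2
    rwa [norm_sub_sq_real, real_inner_smul_right, norm_smul, Real.norm_of_nonneg ht.le,
      mul_pow] at h
  -- AM-GM: `2 t ⟪u, v⟫ ≥ (‖u‖² - r²) + t² ‖v‖² ≥ 2 t √(‖u‖² - r²) ‖v‖`, then divide by `t > 0`
  nlinarith [sq_nonneg (t * ‖v‖ - √(‖u‖ ^ 2 - r ^ 2))]

section Plane

variable {E : Type*} [NormedAddCommGroup E] [InnerProductSpace ℝ E]
    [Fact (Module.finrank ℝ E = 2)] (o : Orientation ℝ E (Fin 2))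

lemma Orientation.inner_rotation_neg_arcsin_add_pi_div_two {σ : ℝ} (hσ₀ : -1 ≤ σ) (hσ₁ : σ ≤ 1)
    (u v : E) :
    ⟪o.rotation ((-(arcsin σ + π / 2) : ℝ) : Real.Angle) u, v⟫ =
      -(σ * ⟪u, v⟫ + √(1 - σ ^ 2) * o.areaForm u v) := by
  rw [o.rotation_apply, inner_add_left, real_inner_smul_left, real_inner_smul_left,
    Real.Angle.cos_coe, Real.Angle.sin_coe, o.inner_rightAngleRotation_left, cos_neg, sin_neg,
    cos_add_pi_div_two, sin_add_pi_div_two, sin_arcsin hσ₀ hσ₁, cos_arcsin]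
  ring

lemma Orientation.inner_rotation_collisionCone_nonpos {p q vp vq : E} {r t : ℝ}
    (hru : r < ‖q - p‖) (ht : 0 ≤ t) (hcol : dist (p + t • vp) (q + t • vq) ≤ r) :
    ⟪o.rotation ((-(arcsin (r / ‖q - p‖) + π / 2) : ℝ) : Real.Angle) (q - p), vp - vq⟫ ≤ 0 := by
  replace hcol : ‖(q - p) - t • (vp - vq)‖ ≤ r := by
    rwa [dist_eq_norm', show q + t • vq - (p + t • vp) = q - p - t • (vp - vq) by module] at hcol
  generalize q - p = u at *
  generalize vp - vq = v at *
  have hr : 0 ≤ r := (norm_nonneg _).trans hcol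
  have hu : 0 < ‖u‖ := hr.trans_lt hru
  have hσ₀ : 0 ≤ r / ‖u‖ := by positivity
  have hσ₁ : r / ‖u‖ < 1 := (div_lt_one hu).2 hru
  rw [o.inner_rotation_neg_arcsin_add_pi_div_two (by linarith) hσ₁.le, neg_nonpos]
  set σ := r / ‖u‖
  set κ := √(1 - σ ^ 2)
  have hκ : κ ^ 2 = 1 - σ ^ 2 := Real.sq_sqrt (by nlinarith)
  have hκ₀ : 0 ≤ κ := Real.sqrt_nonneg _
  have hP : ‖u‖ * κ * ‖v‖ ≤ ⟪u, v⟫ := by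
    have h := sqrt_sq_sub_sq_mul_norm_le_inner hru ht hcol
    rwa [show ‖u‖ ^ 2 - r ^ 2 = ‖u‖ ^ 2 * (1 - σ ^ 2) by simp only [σ]; field_simp,
      Real.sqrt_mul' _ (by nlinarith), Real.sqrt_sq hu.le] at h
  have hPW := o.inner_sq_add_areaForm_sq u v
  have hP₀ : 0 ≤ ⟪u, v⟫ := le_trans (by positivity) hP
  rcases le_or_gt 0 (o.areaForm u v) with hW | hW
  · positivity
  · -- κ² ω(u, v)² = κ² (‖u‖² ‖v‖² - ⟪u, v⟫²) ≤ (1 - κ²) ⟪u, v⟫² = σ² ⟪u, v⟫² by `hP`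
    have hsq : (κ * -o.areaForm u v) ^ 2 ≤ (σ * ⟪u, v⟫) ^ 2 := by
      have := pow_le_pow_left₀ (by positivity) hP 2
      nlinarith
    nlinarith [(pow_le_pow_iff_left₀ (mul_nonneg hκ₀ (neg_nonneg.2 hW.le)) (mul_nonneg hσ₀ hP₀)
      two_ne_zero).1 hsq]

end Plane

lemma EuclideanSpace.inner_fin_two (x y : EuclideanSpace ℝ (Fin 2)) :
    ⟪x, y⟫ = x 0 * y 0 + x 1 * y 1 := by
  simp [PiLp.inner_apply, Fin.sum_univ_two, mul_comm]

lemma EuclideanSpace.sq_mul_add_sq_mul_pos {x : EuclideanSpace ℝ (Fin 2)} (hx : x ≠ 0) {a b : ℝ}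
    (ha : 0 < a) (hb : 0 < b) : 0 < x 0 ^ 2 * a + x 1 ^ 2 * b := by
  have h : 0 < x 0 ^ 2 + x 1 ^ 2 := by
    simpa [EuclideanSpace.real_norm_sq_eq, Fin.sum_univ_two] using pow_pos (norm_pos_iff.2 hx) 2
  nlinarith [mul_nonneg (sq_nonneg (x 0)) ha.le, mul_nonneg (sq_nonneg (x 1)) hb.le,
    min_le_left a b, min_le_right a b, lt_min ha hb]

theorem stmt15_general {Ω : Type*} [MeasurableSpace Ω] (P : Measure Ω)
    (p_i p_j : EuclideanSpace ℝ (Fin 2)) (r_i r_j : ℝ) (hri : 0 ≤ r_i) (hrj : 0 ≤ r_j)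
    (r : ℝ) (hr : r = r_i + r_j) (d : ℝ) (hd : d = ‖p_j - p_i‖) (hdr : r < d)
    (α : ℝ) (hα : α = Real.arcsin (r / d))
    (N : EuclideanSpace ℝ (Fin 2))
    (hN : N = stdOrientation.rotation ((-(α + π / 2) : ℝ) : Real.Angle) (p_j - p_i))
    (v_j : EuclideanSpace ℝ (Fin 2)) (vhat₁ vhat₂ : ℝ)
    (W₁ W₂ : Ω → ℝ)
    (hindep : IndepFun W₁ W₂ P) (w₁ w₂ : ℝ≥0) (hw₁ : 0 < w₁) (hw₂ : 0 < w₂)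
    (hW₁ : P.map W₁ = gaussianReal 0 w₁) (hW₂ : P.map W₂ = gaussianReal 0 w₂)
    (v_i : Ω → EuclideanSpace ℝ (Fin 2))
    (hv_i : ∀ ω, v_i ω = (WithLp.equiv 2 (Fin 2 → ℝ)).symm ![vhat₁ + W₁ ω, vhat₂ + W₂ ω])
    (φ c : ℝ)
    (herf : (2 / Real.sqrt π) * ∫ t in (0 : ℝ)..c, Real.exp (-t ^ 2) = 1 - 2 * φ)
    (hdet : (inner ℝ N ((WithLp.equiv 2 (Fin 2 → ℝ)).symm ![vhat₁, vhat₂]) : ℝ) -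
        (inner ℝ N v_j : ℝ) ≥ Real.sqrt (2 * ((N 0) ^ 2 * w₁ + (N 1) ^ 2 * w₂)) * c) :
    P {ω | ∃ t : ℝ, 0 ≤ t ∧ dist (p_i + t • v_i ω) (p_j + t • v_j) ≤ r} ≤
      ENNReal.ofReal φ := by
  set V : ℝ≥0 := ⟨N 0 ^ 2, sq_nonneg _⟩ * w₁ + ⟨N 1 ^ 2, sq_nonneg _⟩ * w₂
  set Z : Ω → ℝ := fun ω ↦ N 0 * W₁ ω + N 1 * W₂ ω
  have hZ : P.map Z = gaussianReal 0 V := by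
    simpa using map_const_mul_add_const_mul_eq_gaussianReal hindep hW₁ hW₂ (N 0) (N 1)
  have hV : V ≠ 0 := by
    have hN₀ : N ≠ 0 := by
      rw [← norm_pos_iff, hN, LinearIsometryEquiv.norm_map, ← hd]
      exact (hr ▸ add_nonneg hri hrj).trans_lt hdr
    exact NNReal.coe_ne_zero.1 (EuclideanSpace.sq_mul_add_sq_mul_pos hN₀ hw₁ hw₂).ne'
  have hcollision : {ω | ∃ t : ℝ, 0 ≤ t ∧ dist (p_i + t • v_i ω) (p_j + t • v_j) ≤ r} ⊆
      Z ⁻¹' Iic (-(√(2 * V) * c)) := by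
    rintro ω ⟨t, ht, hcol⟩
    have hcone : ⟪N, v_i ω - v_j⟫ ≤ 0 := by
      rw [hN, hα, hd]
      exact stdOrientation.inner_rotation_collisionCone_nonpos (hd ▸ hdr) ht hcol
    have hsplit : ⟪N, v_i ω⟫ = ⟪N, (WithLp.equiv 2 (Fin 2 → ℝ)).symm ![vhat₁, vhat₂]⟫ + Z ω := by
      simp only [hv_i, WithLp.equiv_symm_apply, EuclideanSpace.inner_fin_two, Matrix.cons_val_zero,
        Matrix.cons_val_one, Matrix.cons_val_fin_one, Z]
      ring
    rw [inner_sub_right, hsplit] at hcone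
    change Z ω ≤ -(√(2 * (N 0 ^ 2 * w₁ + N 1 ^ 2 * w₂)) * c)
    linarith
  calc P {ω | ∃ t : ℝ, 0 ≤ t ∧ dist (p_i + t • v_i ω) (p_j + t • v_j) ≤ r}
      ≤ P (Z ⁻¹' Iic (-(√(2 * V) * c))) := measure_mono hcollision
    _ ≤ P.map Z (Iic (-(√(2 * V) * c))) :=
        Measure.le_map_apply (.of_map_ne_zero (by simp [hZ, NeZero.ne])) _
    _ = ENNReal.ofReal φ := by
        rw [hZ, gaussianReal_Iic_neg_sqrt_mul V hV c]
        congr 1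
        field_simp at herf ⊢
        linarith

/-- The transformed deterministic chance constraint of the paper guarantees that the collision
probability stays below the threshold `φ`: if the first disk's velocity is Gaussian with mean
`(v̂₁, v̂₂)` and independent component noises of variances `w₁, w₂`, `N` is an outer normal of the
collision cone, and `⟪N, v̂⟫ - ⟪N, v_j⟫ ≥ √(2 (N₁² w₁ + N₂² w₂)) · erf⁻¹(1 - 2φ)`, then the
probability that the disks ever collide is at most `φ`. -/
theorem stmt15 {Ω : Type*} [MeasurableSpace Ω] (P : Measure Ω) [IsProbabilityMeasure P]
    (p_i p_j : EuclideanSpace ℝ (Fin 2)) (r_i r_j : ℝ) (hri : 0 ≤ r_i) (hrj : 0 ≤ r_j)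
    (r : ℝ) (hr : r = r_i + r_j) (d : ℝ) (hd : d = ‖p_j - p_i‖) (hdr : r < d)
    (α : ℝ) (hα : α = Real.arcsin (r / d))
    (N : EuclideanSpace ℝ (Fin 2))
    (hN : N = stdOrientation.rotation ((-(α + π / 2) : ℝ) : Real.Angle) (p_j - p_i))
    (v_j : EuclideanSpace ℝ (Fin 2)) (vhat₁ vhat₂ : ℝ)
    (W₁ W₂ : Ω → ℝ) (hW₁m : Measurable W₁) (hW₂m : Measurable W₂)
    (hindep : IndepFun W₁ W₂ P) (w₁ w₂ : ℝ≥0) (hw₁ : 0 < w₁) (hw₂ : 0 < w₂)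
    (hW₁ : P.map W₁ = gaussianReal 0 w₁) (hW₂ : P.map W₂ = gaussianReal 0 w₂)
    (v_i : Ω → EuclideanSpace ℝ (Fin 2))
    (hv_i : ∀ ω, v_i ω = (WithLp.equiv 2 (Fin 2 → ℝ)).symm ![vhat₁ + W₁ ω, vhat₂ + W₂ ω])
    (φ c : ℝ) (hφ : φ ∈ Set.Ioo (0 : ℝ) (1 / 2)) (hc : 0 ≤ c)
    (herf : (2 / Real.sqrt π) * ∫ t in (0 : ℝ)..c, Real.exp (-t ^ 2) = 1 - 2 * φ)
    (hdet : (inner ℝ N ((WithLp.equiv 2 (Fin 2 → ℝ)).symm ![vhat₁, vhat₂]) : ℝ) -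
        (inner ℝ N v_j : ℝ) ≥ Real.sqrt (2 * ((N 0) ^ 2 * w₁ + (N 1) ^ 2 * w₂)) * c) :
    P {ω | ∃ t : ℝ, 0 ≤ t ∧ dist (p_i + t • v_i ω) (p_j + t • v_j) ≤ r} ≤
      ENNReal.ofReal φ :=
  stmt15_general P p_i p_j r_i r_j hri hrj r hr d hd hdr α hα N hN v_j vhat₁ vhat₂ W₁ W₂ hindep w₁
    w₂ hw₁ hw₂ hW₁ hW₂ v_i hv_i φ c herf hdet
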